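/- Let H be a connected bipartite graph of order n₂ and let G be a connected graph with at least two vertices, of order n₁, having t₁ true twin equivalence classes. If dim_l(G) = n₁ − t₁ and the diameter of G satisfies D(G) < r(H), where r(H) is the radius of H, then dim_l(G ⊠ H) = n₂(n₁ − t₁). -/

import Mathlib

open SimpleGraph

/-- The strong product of two simple graphs. -/
def strongProd {α β : Type*} (G : SimpleGraph α) (H : SimpleGraph β) :
    SimpleGraph (α × β) where
  Adj x y := (x.1 = y.1 ∧ H.Adj x.2 y.2) ∨ (x.2 = y.2 ∧ G.Adj x.1 y.1) ∨
      (G.Adj x.1 y.1 ∧ H.Adj x.2 y.2)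
  symm := by
    constructor
    rintro x y (⟨h1, h2⟩ | ⟨h1, h2⟩ | ⟨h1, h2⟩)
    · exact Or.inl ⟨h1.symm, h2.symm⟩
    · exact Or.inr (Or.inl ⟨h1.symm, h2.symm⟩)
    · exact Or.inr (Or.inr ⟨h1.symm, h2.symm⟩)
  loopless := by
    constructor
    rintro x (⟨_, h⟩ | ⟨_, h⟩ | ⟨h, _⟩)
    · exact H.irrefl h
    · exact G.irrefl h
    · exact G.irrefl h

/-- A set `S` is a local metric generator for `G` if every pair of adjacent
vertices is distinguished by some element of `S`. -/
def IsLocalMetricGenerator {α : Type*} (G : SimpleGraph α) (S : Set α) : Prop :=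
  ∀ u v : α, G.Adj u v → ∃ s ∈ S, G.dist u s ≠ G.dist v s

/-- The local metric dimension of a graph. -/
noncomputable def localMetricDim {α : Type*} [Fintype α] (G : SimpleGraph α) : ℕ :=
  sInf {n | ∃ S : Finset α, S.card = n ∧ IsLocalMetricGenerator G ↑S}

/-- A set `S` is a metric generator for `G` if every pair of distinct
vertices is distinguished by some element of `S`. -/
def IsMetricGenerator {α : Type*} (G : SimpleGraph α) (S : Set α) : Prop :=
  ∀ u v : α, u ≠ v → ∃ s ∈ S, G.dist u s ≠ G.dist v s

/-- The metric dimension of a graph. -/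
noncomputable def metricDim {α : Type*} [Fintype α] (G : SimpleGraph α) : ℕ :=
  sInf {n | ∃ S : Finset α, S.card = n ∧ IsMetricGenerator G ↑S}

/-- The eccentricity of a vertex: the maximum distance to another vertex. -/
noncomputable def eccentricity {α : Type*} (G : SimpleGraph α) (v : α) : ℕ :=
  sSup {d | ∃ u, G.dist v u = d}

/-- The diameter of a graph: maximum eccentricity. -/
noncomputable def graphDiam {α : Type*} (G : SimpleGraph α) : ℕ :=
  sSup {d | ∃ v, eccentricity G v = d}

/-- The radius of a graph: minimum eccentricity. -/
noncomputable def graphRadius {α : Type*} (G : SimpleGraph α) : ℕ :=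
  sInf {d | ∃ v, eccentricity G v = d}

/-- The interval `I[x,y]`: vertices lying on some shortest `x`–`y` path. -/
def interval {α : Type*} (G : SimpleGraph α) (x y : α) : Set α :=
  {w | G.dist x w + G.dist w y = G.dist x y}

/-- A graph is adjacency `k`-resolved if for every pair of adjacent vertices
`x, y` there is a vertex `w` with `d(y,w) ≥ k` and `x ∈ I[y,w]`, or
`d(x,w) ≥ k` and `y ∈ I[x,w]`. -/
def AdjKResolved {α : Type*} (G : SimpleGraph α) (k : ℕ) : Prop :=
  ∀ x y : α, G.Adj x y →
    ∃ w : α, (k ≤ G.dist y w ∧ x ∈ interval G y w) ∨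
      (k ≤ G.dist x w ∧ y ∈ interval G x w)

/-- The true twin equivalence relation: `u ≈ v` iff `N[u] = N[v]`. -/
def trueTwinSetoid {α : Type*} (G : SimpleGraph α) : Setoid α where
  r u v := insert u (G.neighborSet u) = insert v (G.neighborSet v)
  iseqv := ⟨fun _ => rfl, Eq.symm, Eq.trans⟩

/-!
Distances in `G ⊠ H` are maxima of the distances in the factors. If `W` is a local metric
generator of `G`, then `W × V(H)` is one of `G ⊠ H`: an edge that moves in `G` is resolved
through `W`, and an edge `(a, b)(a, d)` is resolved by `(w, h)` with `h` farthest from `b`; as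
`d_H(b, h) ≥ r(H) > D(G)`, both distances to `(w, h)` are distances in `H`, and these differ
because `H` is bipartite. Conversely, closed neighbourhoods in `G ⊠ H` are products, so
`(a₁, b)` and `(a₂, b)` are true twins whenever `a₁` and `a₂` are; a local metric generator
misses at most one vertex of each true twin class, hence at most `t₁` vertices of each fibre
`V(G) × {b}`.
-/

namespace SimpleGraph

variable {α β : Type*} {G : SimpleGraph α} {H : SimpleGraph β}

section StrongProduct

variable (G H) in
def strongProdLeft (b : β) : G →g strongProd G H where
  toFun a := (a, b)
  map_rel' h := Or.inr (Or.inl ⟨rfl, h⟩)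

variable (G H) in
def strongProdRight (a : α) : H →g strongProd G H where
  toFun b := (a, b)
  map_rel' h := Or.inl ⟨rfl, h⟩

theorem Walk.exists_strongProd_length_eq_max {a c : α} {b d : β} (p : G.Walk a c)
    (q : H.Walk b d) :
    ∃ w : (strongProd G H).Walk (a, b) (c, d), w.length = max p.length q.length := by
  induction p generalizing b with
  | nil => exact ⟨q.map (strongProdRight G H _), (q.length_map _).trans (by simp)⟩
  | cons hac p ih =>
    cases q with
    | nil =>
      exact ⟨(Walk.cons hac p).map (strongProdLeft G H _), (Walk.length_map _ _).trans (by simp)⟩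
    | cons hbd q =>
      obtain ⟨w, hw⟩ := ih q
      have hadj : (strongProd G H).Adj (_, b) (_, _) := Or.inr (Or.inr ⟨hac, hbd⟩)
      exact ⟨.cons hadj w, by simp [hw, Nat.succ_max_succ]⟩

theorem Walk.dist_map_le_length {γ : Type*} {K : SimpleGraph γ} (hK : K.Preconnected)
    {f : α → γ} (hf : ∀ ⦃x y⦄, G.Adj x y → f x = f y ∨ K.Adj (f x) (f y)) {u v : α}
    (p : G.Walk u v) : K.dist (f u) (f v) ≤ p.length := by
  induction p with
  | nil => simp
  | @cons x y _ hxy p ih =>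
    rw [Walk.length_cons]
    rcases hf hxy with hfxy | hfxy
    · rw [hfxy]; omega
    · calc K.dist (f x) _ ≤ K.dist (f x) (f y) + K.dist (f y) _ :=
            (hK _ _).dist_triangle_left _
        _ ≤ _ := by rw [dist_eq_one_iff_adj.mpr hfxy]; omega

theorem Preconnected.strongProd (hG : G.Preconnected) (hH : H.Preconnected) :
    (strongProd G H).Preconnected := by
  rintro ⟨a, b⟩ ⟨c, d⟩
  obtain ⟨p⟩ := hG a c
  obtain ⟨q⟩ := hH b d
  obtain ⟨w, -⟩ := p.exists_strongProd_length_eq_max q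
  exact ⟨w⟩

theorem dist_strongProd (hG : G.Preconnected) (hH : H.Preconnected) (a c : α) (b d : β) :
    (strongProd G H).dist (a, b) (c, d) = max (G.dist a c) (H.dist b d) := by
  obtain ⟨p, hp⟩ := (hG a c).exists_walk_length_eq_dist
  obtain ⟨q, hq⟩ := (hH b d).exists_walk_length_eq_dist
  obtain ⟨w, hw⟩ := p.exists_strongProd_length_eq_max q
  obtain ⟨w', hw'⟩ := (hG.strongProd hH (a, b) (c, d)).exists_walk_length_eq_dist
  refine le_antisymm (hp ▸ hq ▸ hw ▸ dist_le w) (max_le ?_ ?_)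
  · refine hw' ▸ w'.dist_map_le_length (f := Prod.fst) hG ?_
    rintro x y (⟨h, -⟩ | ⟨-, h⟩ | ⟨h, -⟩) <;> simp [h]
  · refine hw' ▸ w'.dist_map_le_length (f := Prod.snd) hH ?_
    rintro x y (⟨-, h⟩ | ⟨h, -⟩ | ⟨-, h⟩) <;> simp [h]

theorem insert_neighborSet_strongProd (x : α × β) :
    insert x ((strongProd G H).neighborSet x) =
      insert x.1 (G.neighborSet x.1) ×ˢ insert x.2 (H.neighborSet x.2) := by
  ext ⟨c, d⟩
  simp only [strongProd, Set.mem_insert_iff, mem_neighborSet, Set.mem_prod, Prod.ext_iff]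
  grind

end StrongProduct

section TrueTwins

variable {u v w : α}

theorem dist_le_of_insert_neighborSet_eq (hG : G.Preconnected)
    (htw : insert u (G.neighborSet u) = insert v (G.neighborSet v)) (hw : w ≠ v) :
    G.dist u w ≤ G.dist v w := by
  obtain ⟨p, hp⟩ := (hG v w).exists_walk_length_eq_dist
  cases p with
  | nil => exact absurd rfl hw
  | @cons _ x _ hvx q =>
    have hux : G.dist u x ≤ 1 := by
      rcases htw ▸ Set.mem_insert_of_mem v hvx with rfl | hux
      · simp
      · exact (dist_eq_one_iff_adj.mpr hux).le
    calc G.dist u w ≤ G.dist u x + G.dist x w := (hG u x).dist_triangle_left w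
      _ ≤ 1 + q.length := add_le_add hux (dist_le q)
      _ = G.dist v w := by rw [← hp, Walk.length_cons, add_comm]

theorem dist_eq_of_insert_neighborSet_eq (hG : G.Preconnected)
    (htw : insert u (G.neighborSet u) = insert v (G.neighborSet v)) (hwu : w ≠ u)
    (hwv : w ≠ v) : G.dist u w = G.dist v w :=
  le_antisymm (dist_le_of_insert_neighborSet_eq hG htw hwv)
    (dist_le_of_insert_neighborSet_eq hG htw.symm hwu)

theorem IsLocalMetricGenerator.eq_of_insert_neighborSet_eq {S : Set α}
    (hS : IsLocalMetricGenerator G S) (hG : G.Preconnected) (hu : u ∉ S) (hv : v ∉ S)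
    (htw : insert u (G.neighborSet u) = insert v (G.neighborSet v)) : u = v := by
  by_contra huv
  have hadj : G.Adj u v := by
    rcases htw ▸ Set.mem_insert v (G.neighborSet v) with h | h
    · exact absurd h.symm huv
    · exact h
  obtain ⟨s, hs, hne⟩ := hS u v hadj
  exact hne (dist_eq_of_insert_neighborSet_eq hG htw (ne_of_mem_of_not_mem hs hu)
    (ne_of_mem_of_not_mem hs hv))

end TrueTwins

theorem Adj.dist_ne_of_colorable_two (hH : H.Preconnected) (hbip : H.Colorable 2) {b d : β}
    (hbd : H.Adj b d) (h : β) : H.dist b h ≠ H.dist d h := by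
  intro heq
  obtain ⟨p, hp⟩ := (hH b h).exists_walk_length_eq_dist
  obtain ⟨q, hq⟩ := (hH d h).exists_walk_length_eq_dist
  have hodd := two_colorable_iff_forall_loop_even.mp hbip b (.cons hbd (q.append p.reverse))
  rw [Walk.length_cons, Walk.length_append, Walk.length_reverse, hp, hq, heq] at hodd
  exact Nat.not_even_two_mul_add_one _ (by rwa [two_mul])

end SimpleGraph

section Eccentricity

variable {α : Type*} [Finite α] (G : SimpleGraph α)

theorem dist_le_eccentricity (u v : α) : G.dist u v ≤ eccentricity G u :=
  le_csSup (Set.finite_range (G.dist u)).bddAbove ⟨v, rfl⟩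

theorem exists_dist_eq_eccentricity (u : α) : ∃ v, G.dist u v = eccentricity G u :=
  Nat.sSup_mem (s := {d | ∃ v, G.dist u v = d}) ⟨0, u, G.dist_self⟩
    (Set.finite_range (G.dist u)).bddAbove

theorem dist_le_graphDiam (u v : α) : G.dist u v ≤ graphDiam G :=
  (dist_le_eccentricity G u v).trans
    (le_csSup (Set.finite_range (eccentricity G)).bddAbove ⟨u, rfl⟩)

theorem exists_graphRadius_le_dist (u : α) : ∃ v, graphRadius G ≤ G.dist u v := by
  obtain ⟨v, hv⟩ := exists_dist_eq_eccentricity G u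
  exact ⟨v, hv ▸ Nat.sInf_le ⟨u, rfl⟩⟩

end Eccentricity

theorem isLocalMetricGenerator_univ {α : Type*} (G : SimpleGraph α) :
    IsLocalMetricGenerator G Set.univ :=
  fun u v huv => ⟨u, trivial, by simp [SimpleGraph.dist_eq_one_iff_adj.mpr huv.symm]⟩

section LocalMetricDimension

variable {α : Type*} [Fintype α] {G : SimpleGraph α}

theorem localMetricDim_le_card {S : Finset α} (hS : IsLocalMetricGenerator G S) :
    localMetricDim G ≤ S.card :=
  Nat.sInf_le ⟨S, rfl, hS⟩

theorem exists_card_eq_localMetricDim (G : SimpleGraph α) :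
    ∃ S : Finset α, S.card = localMetricDim G ∧ IsLocalMetricGenerator G S :=
  Nat.sInf_mem (s := {n | ∃ S : Finset α, S.card = n ∧ IsLocalMetricGenerator G ↑S})
    ⟨_, Finset.univ, rfl, by simpa using isLocalMetricGenerator_univ G⟩

theorem le_localMetricDim {n : ℕ}
    (h : ∀ S : Finset α, IsLocalMetricGenerator G S → n ≤ S.card) : n ≤ localMetricDim G := by
  obtain ⟨S, hcard, hS⟩ := exists_card_eq_localMetricDim G
  exact hcard ▸ h S hS

end LocalMetricDimension

section StrongProductLocalMetricDimension

open SimpleGraph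

variable {α β : Type*} {G : SimpleGraph α} {H : SimpleGraph β}

theorem IsLocalMetricGenerator.prod_univ_strongProd [Finite α] [Finite β] {S : Set α}
    (hS : IsLocalMetricGenerator G S) (hSne : S.Nonempty) (hG : G.Preconnected)
    (hH : H.Preconnected) (hbip : H.Colorable 2) (hD : graphDiam G < graphRadius H) :
    IsLocalMetricGenerator (strongProd G H) (S ×ˢ Set.univ) := by
  have hdist := dist_strongProd hG hH
  rintro ⟨a, b⟩ ⟨c, d⟩ (⟨hac, hbd⟩ | ⟨hbd, hac⟩ | ⟨hac, hbd⟩)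
  · obtain rfl : a = c := hac
    obtain ⟨w, hw⟩ := hSne
    obtain ⟨h, hh⟩ := exists_graphRadius_le_dist H b
    have haw := dist_le_graphDiam G a w
    have hbh : H.dist b h ≤ H.dist b d + H.dist d h := (hH b d).dist_triangle_left h
    rw [dist_eq_one_iff_adj.mpr hbd] at hbh
    refine ⟨(w, h), ⟨hw, trivial⟩, ?_⟩
    rw [hdist, hdist, max_eq_right (by omega), max_eq_right (by omega)]
    exact hbd.dist_ne_of_colorable_two hH hbip h
  · obtain rfl : b = d := hbd
    obtain ⟨w, hw, hne⟩ := hS a c hac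
    exact ⟨(w, b), ⟨hw, trivial⟩, by simpa [hdist] using hne⟩
  · obtain ⟨w, hw, hne⟩ := hS a c hac
    by_cases hwc : w = c
    · subst hwc
      refine ⟨(w, d), ⟨hw, trivial⟩, ?_⟩
      simp [hdist, dist_eq_one_iff_adj.mpr hac, dist_eq_one_iff_adj.mpr hbd]
    · have hcw : 1 ≤ G.dist c w := (hG c w).pos_dist_of_ne (Ne.symm hwc)
      refine ⟨(w, b), ⟨hw, trivial⟩, ?_⟩
      rwa [hdist, hdist, dist_self, max_eq_left (Nat.zero_le _), dist_eq_one_iff_adj.mpr hbd.symm,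
        max_eq_left hcw]

theorem card_sub_le_card_of_isLocalMetricGenerator_strongProd [Fintype α] [Fintype β]
    (hG : G.Preconnected) (hH : H.Preconnected) {S : Finset (α × β)}
    (hS : IsLocalMetricGenerator (strongProd G H) S) :
    Fintype.card β * (Fintype.card α - Nat.card (Quotient (trueTwinSetoid G))) ≤ S.card := by
  classical
  -- Outside `S`, a vertex `(a, b)` is determined by `b` and the true twin class of `a`.
  have hinj : Function.Injective fun x : (Sᶜ : Finset (α × β)) =>
      (x.1.2, (⟦x.1.1⟧ : Quotient (trueTwinSetoid G))) := by
    rintro ⟨⟨a₁, b⟩, h₁⟩ ⟨⟨a₂, b₂⟩, h₂⟩ heq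
    obtain ⟨rfl, htw⟩ := Prod.mk.inj heq
    have htw' : insert (a₁, b) ((strongProd G H).neighborSet (a₁, b)) =
        insert (a₂, b) ((strongProd G H).neighborSet (a₂, b)) := by
      rw [insert_neighborSet_strongProd, insert_neighborSet_strongProd]
      exact congrArg (· ×ˢ _) (Quotient.exact htw)
    exact Subtype.ext <| hS.eq_of_insert_neighborSet_eq (hG.strongProd hH)
      (by simpa using h₁) (by simpa using h₂) htw'
  have hcompl := Nat.card_le_card_of_injective _ hinj
  rw [Nat.card_prod, Nat.card_eq_fintype_card, Nat.card_eq_fintype_card, Fintype.card_coe,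
    Finset.card_compl, Fintype.card_prod] at hcompl
  rw [Nat.mul_sub, mul_comm]
  omega

end StrongProductLocalMetricDimension

/-- if `H` is bipartite, `dim_l(G) = n₁ − t₁` and `D(G) < r(H)`,
then `dim_l(G ⊠ H) = n₂(n₁ − t₁)`. -/
theorem stmt10 {α β : Type*} [Fintype α] [Fintype β]
    (G : SimpleGraph α) (H : SimpleGraph β)
    (hH : H.Connected) (hbip : H.Colorable 2)
    (hG : G.Connected) (hn1 : 2 ≤ Fintype.card α)
    (t1 : ℕ) (ht1 : Nat.card (Quotient (trueTwinSetoid G)) = t1)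
    (hdimG : localMetricDim G = Fintype.card α - t1)
    (hD : graphDiam G < graphRadius H) :
    localMetricDim (strongProd G H) =
      Fintype.card β * (Fintype.card α - t1) := by
  classical
  obtain ⟨W, hWcard, hW⟩ := exists_card_eq_localMetricDim G
  have hWne : W.Nonempty := by
    have : Nontrivial α := Fintype.one_lt_card_iff_nontrivial.mp hn1
    obtain ⟨a, c, hac⟩ : ∃ a c, G.Adj a c :=
      ⟨_, hG.preconnected.exists_adj_of_nontrivial (Classical.arbitrary α)⟩
    obtain ⟨w, hw, -⟩ := hW a c hac
    exact ⟨w, hw⟩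
  have hWH : IsLocalMetricGenerator (strongProd G H) ↑(W ×ˢ (Finset.univ : Finset β)) := by
    rw [Finset.coe_product, Finset.coe_univ]
    exact hW.prod_univ_strongProd (Finset.coe_nonempty.mpr hWne) hG.preconnected hH.preconnected
      hbip hD
  refine le_antisymm ?_ (le_localMetricDim fun S hS => ?_)
  · calc localMetricDim (strongProd G H) ≤ (W ×ˢ Finset.univ).card := localMetricDim_le_card hWH
      _ = Fintype.card β * (Fintype.card α - t1) := by
        rw [Finset.card_product, hWcard, hdimG, Finset.card_univ, mul_comm]
  · exact ht1 ▸ card_sub_le_card_of_isLocalMetricGenerator_strongProd hG.preconnected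
      hH.preconnected hS
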